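/- arXiv:1611.08140 — 4 statements merged into one kernel-verified Lean document; each statement's English description precedes it below -/
import Mathlib

section
/- Let κ be an uncountable regular cardinal. Then (i) the dominating number 𝔡_κ equals the least cardinality of a family 𝒥 of interval partitions of κ such that every interval partition of κ is dominated (≤*) by some member of 𝒥, and (ii) the unbounding number 𝔟_κ equals the least cardinality of a family 𝒥 of interval partitions of κ such that no single interval partition of κ dominates every member of 𝒥. -/
namespace GenCichon

noncomputable section

open Cardinal Set Ordinal

variable (κ : Cardinal.{0})

/-- The ordinals below `κ`, i.e. the cardinal `κ` viewed as a set of ordinals. -/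
abbrev Idx : Type 1 := ↥(Set.Iio κ.ord)

/-- The generalized Cantor space `2^κ`. -/
abbrev GenCantor : Type 1 := Idx κ → Bool

/-- The generalized Baire space `κ^κ`. -/
abbrev GenBaire : Type 1 := Idx κ → Idx κ

/-- The basic open (cylinder) set `[σ]` determined by the element `σ` of `2^{<κ}`
with domain `[0, δ)` (values of `σ` at or above `δ` are irrelevant). -/
def cyl (δ : Ordinal) (σ : Ordinal → Bool) : Set (GenCantor κ) :=
  { x | ∀ β : Idx κ, β.1 < δ → x β = σ β.1 }

/-- `A ⊆ 2^κ` is nowhere dense: every basic open set `[σ]`, `σ ∈ 2^{<κ}`, has a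
basic open refinement `[σ'] ⊆ [σ]` disjoint from `A`. -/
def IsNwd (A : Set (GenCantor κ)) : Prop :=
  ∀ δ < κ.ord, ∀ σ : Ordinal → Bool, ∃ δ', δ ≤ δ' ∧ δ' < κ.ord ∧
    ∃ σ' : Ordinal → Bool, (∀ β < δ, σ' β = σ β) ∧ cyl κ δ' σ' ∩ A = ∅

/-- `A ⊆ 2^κ` is `κ`-meager: a union of `κ` many nowhere dense sets. -/
def IsKMeager (A : Set (GenCantor κ)) : Prop :=
  ∃ B : Idx κ → Set (GenCantor κ), (∀ i, IsNwd κ (B i)) ∧ A = ⋃ i, B i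

/-- The covering number of the `κ`-meager ideal. -/
def covM : Cardinal.{1} :=
  sInf { c : Cardinal.{1} | ∃ J : Set (Set (GenCantor κ)),
    (∀ A ∈ J, IsKMeager κ A) ∧ ⋃₀ J = Set.univ ∧ c = #J }

/-- The uniformity number of the `κ`-meager ideal. -/
def nonM : Cardinal.{1} :=
  sInf { c : Cardinal.{1} | ∃ X : Set (GenCantor κ), ¬ IsKMeager κ X ∧ c = #X }

/-- The additivity number of the `κ`-meager ideal. -/
def addM : Cardinal.{1} :=
  sInf { c : Cardinal.{1} | ∃ J : Set (Set (GenCantor κ)),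
    (∀ A ∈ J, IsKMeager κ A) ∧ ¬ IsKMeager κ (⋃₀ J) ∧ c = #J }

/-- The cofinality number of the `κ`-meager ideal. -/
def cofM : Cardinal.{1} :=
  sInf { c : Cardinal.{1} | ∃ J : Set (Set (GenCantor κ)),
    (∀ A ∈ J, IsKMeager κ A) ∧ (∀ A, IsKMeager κ A → ∃ B ∈ J, A ⊆ B) ∧ c = #J }

/-- `g` eventually dominates `f` (`f <* g`). -/
def EvDom (f g : GenBaire κ) : Prop :=
  ∃ α : Idx κ, ∀ β : Idx κ, α < β → f β < g β

/-- The unbounding number `𝔟_κ`. -/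
def bK : Cardinal.{1} :=
  sInf { c : Cardinal.{1} | ∃ F : Set (GenBaire κ),
    (∀ g : GenBaire κ, ∃ f ∈ F, ¬ EvDom κ f g) ∧ c = #F }

/-- The dominating number `𝔡_κ`. -/
def dK : Cardinal.{1} :=
  sInf { c : Cardinal.{1} | ∃ F : Set (GenBaire κ),
    (∀ g : GenBaire κ, ∃ f ∈ F, EvDom κ g f) ∧ c = #F }

/-- `f` and `g` are eventually different (`f ≠* g`). -/
def EvDiff (f g : GenBaire κ) : Prop :=
  #{ α : Idx κ | f α = g α } < Cardinal.lift.{1} κ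

/-- `𝔟_κ(≠*)`: least size of a family such that every `g` is cofinally matching
with some member of it. -/
def bNeq : Cardinal.{1} :=
  sInf { c : Cardinal.{1} | ∃ F : Set (GenBaire κ),
    (∀ g : GenBaire κ, ∃ f ∈ F, ¬ EvDiff κ f g) ∧ c = #F }

/-- `𝔡_κ(≠*)`: least size of a family such that every `g` is eventually different
from some member of it. -/
def dNeq : Cardinal.{1} :=
  sInf { c : Cardinal.{1} | ∃ F : Set (GenBaire κ),
    (∀ g : GenBaire κ, ∃ f ∈ F, EvDiff κ f g) ∧ c = #F }

/-- An interval partition of `κ`: a strictly increasing continuous sequence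
`(pts α : α < κ)` of ordinals below `κ` with `pts 0 = 0`; the `α`-th interval is
`[pts α, pts (α+1))`.  (Values at or above `κ` are normalized to `0`, so that an
interval partition is determined by its restriction below `κ`.) -/
structure IntervalPartition where
  pts : Ordinal → Ordinal
  zero : pts 0 = 0
  lt_ord : ∀ α < κ.ord, pts α < κ.ord
  strictMono : ∀ α β : Ordinal, α < β → β < κ.ord → pts α < pts β
  isCont : ∀ δ < κ.ord, Order.IsSuccLimit δ → pts δ = ⨆ β : ↥(Set.Iio δ), pts β.1
  eq_zero_of_le : ∀ α, κ.ord ≤ α → pts α = 0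

/-- The `β`-th interval of `J` is included in the `α`-th interval of `I`. -/
def SubIntv (J : IntervalPartition κ) (β : Ordinal) (I : IntervalPartition κ)
    (α : Ordinal) : Prop :=
  I.pts α ≤ J.pts β ∧ J.pts (β + 1) ≤ I.pts (α + 1)

/-- `I` dominates `J` (`J ≤* I`): from some point on, every interval of `I`
contains an interval of `J`. -/
def IPDom (J I : IntervalPartition κ) : Prop :=
  ∃ γ < κ.ord, ∀ α, γ < α → α < κ.ord → ∃ β < κ.ord, SubIntv κ J β I α

/-- `y` matches the `κ`-chopped function `(x, I)`: `y` and `x` agree on cofinally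
many intervals of `I`. -/
def Matches (y x : GenCantor κ) (I : IntervalPartition κ) : Prop :=
  ∀ γ < κ.ord, ∃ α, γ ≤ α ∧ α < κ.ord ∧
    ∀ β : Idx κ, I.pts α ≤ β.1 → β.1 < I.pts (α + 1) → y β = x β

/-- The set of elements of `2^κ` matching the `κ`-chopped function `(x, I)`. -/
def MatchSet (x : GenCantor κ) (I : IntervalPartition κ) : Set (GenCantor κ) :=
  { y | Matches κ y x I }

/-- `h ∈ κ^κ` tends to `κ`: `lim_{α → κ} h(α) = κ`. -/
def TendsToTop (h : GenBaire κ) : Prop :=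
  ∀ γ : Idx κ, ∃ α : Idx κ, ∀ β : Idx κ, α ≤ β → γ ≤ h β

/-- `φ` is an `h`-slalom: `φ(α)` is a subset of `κ` of cardinality `|h(α)|`. -/
def IsSlalom (h : GenBaire κ) (φ : Idx κ → Set (Idx κ)) : Prop :=
  ∀ α : Idx κ, #(φ α) = Cardinal.lift.{1} (h α).1.card

/-- The (total) slalom `φ` localizes `f` (`f ∈* φ`). -/
def Localizes (φ : Idx κ → Set (Idx κ)) (f : GenBaire κ) : Prop :=
  #{ α : Idx κ | f α ∉ φ α } < Cardinal.lift.{1} κ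

/-- `𝔟_h(∈*)`. -/
def bLoc (h : GenBaire κ) : Cardinal.{1} :=
  sInf { c : Cardinal.{1} | ∃ F : Set (GenBaire κ),
    (∀ φ : Idx κ → Set (Idx κ), IsSlalom κ h φ → ∃ f ∈ F, ¬ Localizes κ φ f) ∧ c = #F }

/-- `𝔡_h(∈*)`. -/
def dLoc (h : GenBaire κ) : Cardinal.{1} :=
  sInf { c : Cardinal.{1} | ∃ Φ : Set (Idx κ → Set (Idx κ)),
    (∀ φ ∈ Φ, IsSlalom κ h φ) ∧ (∀ f : GenBaire κ, ∃ φ ∈ Φ, Localizes κ φ f) ∧ c = #Φ }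

/-- A partial `h`-slalom: a slalom whose domain is a subset of `κ` of cardinality `κ`.
(The values outside the domain are normalized to `∅`.) -/
structure PartialSlalom (h : GenBaire κ) where
  dom : Set (Idx κ)
  dom_card : #dom = Cardinal.lift.{1} κ
  fn : Idx κ → Set (Idx κ)
  fn_card : ∀ α ∈ dom, #(fn α) = Cardinal.lift.{1} (h α).1.card
  eq_empty_of_not_mem : ∀ α ∉ dom, fn α = ∅

/-- The partial slalom `φ` localizes `f` (`f ∈* φ`). -/
def PLocalizes {h : GenBaire κ} (φ : PartialSlalom κ h) (f : GenBaire κ) : Prop :=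
  #{ α : Idx κ | α ∈ φ.dom ∧ f α ∉ φ.fn α } < Cardinal.lift.{1} κ

/-- `𝔟_h(p∈*)`. -/
def bPLoc (h : GenBaire κ) : Cardinal.{1} :=
  sInf { c : Cardinal.{1} | ∃ F : Set (GenBaire κ),
    (∀ φ : PartialSlalom κ h, ∃ f ∈ F, ¬ PLocalizes κ φ f) ∧ c = #F }

/-- `𝔡_h(p∈*)`. -/
def dPLoc (h : GenBaire κ) : Cardinal.{1} :=
  sInf { c : Cardinal.{1} | ∃ Φ : Set (PartialSlalom κ h),
    (∀ f : GenBaire κ, ∃ φ ∈ Φ, PLocalizes κ φ f) ∧ c = #Φ }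

/-- `X ⊆ 2^κ` is open in the `<κ`-box topology. -/
def IsOpenK (X : Set (GenCantor κ)) : Prop :=
  ∀ x ∈ X, ∃ δ < κ.ord, { y : GenCantor κ | ∀ β : Idx κ, β.1 < δ → y β = x β } ⊆ X

/-- `X ⊆ 2^κ` is dense: it meets every basic open set. -/
def IsDenseK (X : Set (GenCantor κ)) : Prop :=
  ∀ δ < κ.ord, ∀ σ : Ordinal → Bool, (cyl κ δ σ ∩ X).Nonempty

/-- Coordinatewise addition modulo 2 on `2^κ`. -/
def addMod2 (x y : GenCantor κ) : GenCantor κ := fun α => Bool.xor (x α) (y α)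

/-- The identification of `σ ∈ 2^{<κ}` (with domain `[0, δ)`) with the element of
`2^κ` extending `σ` by `0`'s. -/
def extendZero (δ : Ordinal) (σ : Ordinal → Bool) : GenCantor κ :=
  fun α => if α.1 < δ then σ α.1 else false

end

end GenCichon

/-!
The closure points of `g ∈ κ^κ` (ordinals `δ` with `g[δ] ⊆ δ`) form a club in `κ`, whose
increasing enumeration is an interval partition `I_g` with all its points closed under `g`.
Conversely an interval partition `K` gives the function `β ↦ k_{β+2}`. These maps are Tukey
connections in both directions between `(κ^κ, <*)` and (interval partitions, `≤*`). If `K`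
dominates `I_g`, then for large `β` the interval `[k_{β+1}, k_{β+2})` contains an interval of
`I_g`, which lies above `β` and ends at a closure point, so `g(β) < k_{β+2}`. If `g` eventually
dominates `β ↦ k_{β+2}`, then for large `ξ` and `b = i_ξ` we get `k_{b+2} < g(b) < i_{ξ+1}`, so
`[k_{b+1}, k_{b+2}) ⊆ [i_ξ, i_{ξ+1})`. Tukey equivalent relations have the same dominating and
unbounding numbers.
-/

open Cardinal Set Order

theorem Cardinal.IsRegular.isRegularCardinalOrder_Iio_ord {c : Cardinal.{u}} (hc : c.IsRegular) :
    IsRegularCardinalOrder (Iio c.ord) where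
  type_lt_le_ord_cof := by
    rw [Ordinal.type_lt_Iio, Ordinal.cof_Iio, ← Ordinal.lift_cof, hc.cof_ord, Cardinal.lift_ord]

section ClosurePoints

variable {α : Type*} [LinearOrder α]

theorem Order.exists_forall_lt_of_mk_lt_cof {s : Set α} (hs : #s < cof α) :
    ∃ x, ∀ y ∈ s, y < x :=
  not_isCofinal_iff.1 fun h => (cof_le h).not_gt hs

def closurePoints (g : α → α) : Set α :=
  {x | ∀ y < x, g y < x}

theorem dirSupClosed_closurePoints (g : α → α) : DirSupClosed (closurePoints g) := by
  intro d hd _ _ a ha y hy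
  obtain ⟨c, hc, hyc⟩ : ∃ c ∈ d, y < c := by
    by_contra! h
    exact (ha.2 h).not_gt hy
  exact (hd hc y hyc).trans_le (ha.1 hc)

variable [WellFoundedLT α] [IsRegularCardinalOrder α]

theorem Order.mk_Iio_lt_cof (x : α) : #(Iio x) < cof α := by
  have := isWellOrder_lt (α := α)
  rw [cof_eq_cardinalMk]
  exact (Ordinal.card_typein (r := (· < ·)) x).symm.trans_lt (card_typein_lt x ord_cardinalMk)

theorem isCofinal_closurePoints (hα : ℵ₀ < cof α) (g : α → α) :
    IsCofinal (closurePoints g) := by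
  have hbound : ∀ x, ∃ b, ∀ y < x, g y < b := fun x => by
    obtain ⟨b, hb⟩ := exists_forall_lt_of_mk_lt_cof (mk_image_le.trans_lt (mk_Iio_lt_cof x))
    exact ⟨b, fun y hy => hb _ ⟨y, hy, rfl⟩⟩
  choose F hF using hbound
  intro a
  obtain ⟨b, hb⟩ := exists_forall_lt_of_mk_lt_cof (s := range fun n => F^[n] a)
    ((mk_le_aleph0_iff.2 (countable_range _)).trans_lt hα)
  obtain ⟨c, hc, hcmin⟩ := wellFounded_lt.has_min (upperBounds (range fun n => F^[n] a))
    ⟨b, by rintro _ ⟨n, rfl⟩; exact (hb _ ⟨n, rfl⟩).le⟩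
  refine ⟨c, fun y hy => ?_, hc ⟨0, rfl⟩⟩
  obtain ⟨n, hn⟩ : ∃ n, y < F^[n] a := by
    by_contra! h
    exact hcmin y (by rintro _ ⟨n, rfl⟩; exact h n) hy
  calc g y < F^[n + 1] a := by rw [Function.iterate_succ_apply']; exact hF _ y hn
    _ ≤ c := hc ⟨n + 1, rfl⟩

theorem isClub_closurePoints (hα : ℵ₀ < cof α) (g : α → α) : IsClub (closurePoints g) :=
  ⟨dirSupClosed_closurePoints g, isCofinal_closurePoints hα g⟩

end ClosurePoints

section RelationalSystem

variable {X Y X' Y' : Type u} {R : X → Y → Prop} {R' : X' → Y' → Prop}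

def IsDominatingFamily (R : X → Y → Prop) (F : Set Y) : Prop :=
  ∀ x, ∃ y ∈ F, R x y

def IsUnboundedFamily (R : X → Y → Prop) (F : Set X) : Prop :=
  ∀ y, ∃ x ∈ F, ¬ R x y

noncomputable def dominatingNumber (R : X → Y → Prop) : Cardinal.{u} :=
  sInf {c | ∃ F, IsDominatingFamily R F ∧ c = #F}

noncomputable def unboundingNumber (R : X → Y → Prop) : Cardinal.{u} :=
  sInf {c | ∃ F, IsUnboundedFamily R F ∧ c = #F}

def TukeyLE (R : X → Y → Prop) (R' : X' → Y' → Prop) : Prop :=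
  ∃ (φ : X → X') (ψ : Y' → Y), ∀ x y', R' (φ x) y' → R x (ψ y')

theorem TukeyLE.exists_isDominatingFamily (h : TukeyLE R R') {F' : Set Y'}
    (hF' : IsDominatingFamily R' F') : ∃ F, IsDominatingFamily R F ∧ #F ≤ #F' := by
  obtain ⟨φ, ψ, hφψ⟩ := h
  refine ⟨ψ '' F', fun x => ?_, mk_image_le⟩
  obtain ⟨y', hy', hxy'⟩ := hF' (φ x)
  exact ⟨ψ y', mem_image_of_mem ψ hy', hφψ x y' hxy'⟩

theorem TukeyLE.exists_isUnboundedFamily (h : TukeyLE R R') {F : Set X}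
    (hF : IsUnboundedFamily R F) : ∃ F', IsUnboundedFamily R' F' ∧ #F' ≤ #F := by
  obtain ⟨φ, ψ, hφψ⟩ := h
  refine ⟨φ '' F, fun y' => ?_, mk_image_le⟩
  obtain ⟨x, hx, hxy⟩ := hF (ψ y')
  exact ⟨φ x, mem_image_of_mem φ hx, fun h => hxy (hφψ x y' h)⟩

theorem dominatingNumber_eq_of_tukeyLE (h : TukeyLE R R') (h' : TukeyLE R' R) :
    dominatingNumber R = dominatingNumber R' := by
  refine csInf_eq_csInf_of_forall_exists_le ?_ ?_
  · rintro _ ⟨F, hF, rfl⟩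
    obtain ⟨F', hF', hle⟩ := h'.exists_isDominatingFamily hF
    exact ⟨_, ⟨F', hF', rfl⟩, hle⟩
  · rintro _ ⟨F', hF', rfl⟩
    obtain ⟨F, hF, hle⟩ := h.exists_isDominatingFamily hF'
    exact ⟨_, ⟨F, hF, rfl⟩, hle⟩

theorem unboundingNumber_eq_of_tukeyLE (h : TukeyLE R R') (h' : TukeyLE R' R) :
    unboundingNumber R = unboundingNumber R' := by
  refine csInf_eq_csInf_of_forall_exists_le ?_ ?_
  · rintro _ ⟨F, hF, rfl⟩
    obtain ⟨F', hF', hle⟩ := h.exists_isUnboundedFamily hF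
    exact ⟨_, ⟨F', hF', rfl⟩, hle⟩
  · rintro _ ⟨F', hF', rfl⟩
    obtain ⟨F, hF, hle⟩ := h'.exists_isUnboundedFamily hF'
    exact ⟨_, ⟨F, hF, rfl⟩, hle⟩

end RelationalSystem

namespace GenCichon

namespace IntervalPartition

variable {κ : Cardinal.{0}} (I : IntervalPartition κ)

theorem lt_ord_of_lt_pts {β ξ : Ordinal} (h : β < I.pts ξ) : ξ < κ.ord := by
  by_contra! hξ
  rw [I.eq_zero_of_le ξ hξ] at h
  exact zero_le.not_gt h

theorem pts_mono {ζ ξ : Ordinal} (h : ζ ≤ ξ) (hξ : ξ < κ.ord) : I.pts ζ ≤ I.pts ξ := by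
  rcases h.eq_or_lt with rfl | h
  · exact le_rfl
  · exact (I.strictMono _ _ h hξ).le

theorem le_pts {ξ : Ordinal} (hξ : ξ < κ.ord) : ξ ≤ I.pts ξ := by
  have hmono : StrictMono fun ζ : Idx κ => (⟨I.pts ζ, I.lt_ord ζ ζ.2⟩ : Idx κ) :=
    fun ζ ζ' h => I.strictMono ζ ζ' h ζ'.2
  exact hmono.le_apply (x := ⟨ξ, hξ⟩)

def ClosedUnder (g : GenBaire κ) : Prop :=
  ∀ ξ, ∀ β : Idx κ, β.1 < I.pts ξ → (g β).1 < I.pts ξ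

noncomputable def ofIsNormal (e : Idx κ → Idx κ) (he : IsNormal e)
    (h0 : ∀ x : Idx κ, x.1 = 0 → (e x).1 = 0) : IntervalPartition κ where
  pts ξ := if h : ξ < κ.ord then (e ⟨ξ, h⟩).1 else 0
  zero := by
    split_ifs
    · exact h0 _ rfl
    · rfl
  lt_ord ξ h := by rw [dif_pos h]; exact (e _).2
  strictMono ξ ζ h hζ := by
    rw [dif_pos hζ, dif_pos (h.trans hζ)]
    exact he.strictMono h
  isCont δ hδ hlim := by
    have hlub := he.isLUB_image_Iio_of_isSuccLimit
      ((principalSegIio κ.ord).isSuccLimit_apply_iff.1 hlim : IsSuccLimit (⟨δ, hδ⟩ : Idx κ))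
    rw [dif_pos hδ]
    apply le_antisymm
    · rcases lt_or_ge (⨆ ζ : Iio δ, if h : ζ.1 < κ.ord then (e ⟨ζ.1, h⟩).1 else 0) κ.ord
        with hs | hs
      · suffices e ⟨δ, hδ⟩ ≤ ⟨_, hs⟩ from this
        refine hlub.2 ?_
        rintro _ ⟨ζ, hζ, rfl⟩
        rw [← Subtype.coe_le_coe]
        have := Ordinal.le_iSup
          (fun ζ : Iio δ => if h : ζ.1 < κ.ord then (e ⟨ζ.1, h⟩).1 else 0) ⟨ζ.1, hζ⟩
        simpa [Set.mem_Iio.1 ζ.2] using this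
      · exact (e _).2.le.trans hs
    · refine Ordinal.iSup_le fun ζ => ?_
      rw [dif_pos (ζ.2.trans hδ)]
      exact (he.strictMono (show (⟨ζ.1, ζ.2.trans hδ⟩ : Idx κ) < ⟨δ, hδ⟩ from ζ.2)).le
  eq_zero_of_le ξ h := dif_neg h.not_gt

theorem ofIsNormal_pts (e : Idx κ → Idx κ) (he : IsNormal e)
    (h0 : ∀ x : Idx κ, x.1 = 0 → (e x).1 = 0) (ξ : Idx κ) :
    (ofIsNormal e he h0).pts ξ = (e ξ).1 :=
  dif_pos ξ.2

theorem exists_closedUnder (hreg : κ.IsRegular) (hunc : ℵ₀ < κ) (g : GenBaire κ) :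
    ∃ I : IntervalPartition κ, I.ClosedUnder g := by
  have := hreg.isRegularCardinalOrder_Iio_ord
  have hC : IsClub (closurePoints g) := isClub_closurePoints (by
    rwa [Ordinal.cof_Iio, ← Ordinal.lift_cof, hreg.cof_ord, aleph0_lt_lift]) g
  have hmin : ∀ x : Idx κ, x.1 = 0 → ∀ y, ¬ y < x := fun x hx y hy =>
    not_lt.2 zero_le (hx ▸ hy : y.1 < 0)
  refine ⟨ofIsNormal _ hC.isNormal_enum fun x hx => ?_, fun ξ β hβ => ?_⟩
  · have hx' : x ∈ closurePoints g := fun y hy => (hmin x hx y hy).elim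
    exact nonpos_iff_eq_zero.1 (hx ▸ enum_le_of_forall_lt hx' fun y hy => (hmin x hx y hy).elim)
  · have hξ := (ofIsNormal _ hC.isNormal_enum _).lt_ord_of_lt_pts hβ
    rw [ofIsNormal_pts (ξ := ⟨ξ, hξ⟩)] at hβ ⊢
    exact (enum (closurePoints g) hC.isCofinal ⟨ξ, hξ⟩).2 β hβ

def ptsAddTwo (hκ : IsSuccLimit κ.ord) : GenBaire κ :=
  fun β => ⟨I.pts (β.1 + 1 + 1), I.lt_ord _ (hκ.add_one_lt (hκ.add_one_lt β.2))⟩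

end IntervalPartition

open IntervalPartition

section Dominance

variable {κ : Cardinal.{0}} {I K : IntervalPartition κ} {g : GenBaire κ}

theorem evDom_ptsAddTwo_of_ipDom (hκ : IsSuccLimit κ.ord) (hI : I.ClosedUnder g)
    (h : IPDom κ I K) : EvDom κ g (K.ptsAddTwo hκ) := by
  obtain ⟨γ, hγ, hdom⟩ := h
  refine ⟨⟨K.pts γ, K.lt_ord γ hγ⟩, fun β (hβ : K.pts γ < β.1) => ?_⟩
  have hβ₁ : β.1 + 1 < κ.ord := hκ.add_one_lt β.2
  have hγβ : γ < β.1 + 1 := ((K.le_pts hγ).trans_lt hβ).trans (lt_add_one _)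
  obtain ⟨η, hη, hKI, hIK⟩ := hdom _ hγβ hβ₁
  have hβI : β.1 < I.pts (η + 1) := calc
    β.1 < K.pts (β.1 + 1) := (lt_add_one _).trans_le (K.le_pts hβ₁)
    _ ≤ I.pts η := hKI
    _ ≤ I.pts (η + 1) := I.pts_mono (lt_add_one η).le (hκ.add_one_lt hη)
  exact (hI _ β hβI).trans_le hIK

theorem ipDom_of_evDom_ptsAddTwo (hκ : IsSuccLimit κ.ord) (hI : I.ClosedUnder g)
    (h : EvDom κ (K.ptsAddTwo hκ) g) : IPDom κ K I := by
  obtain ⟨α, hα⟩ := h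
  refine ⟨α.1, α.2, fun ξ hαξ hξ => ?_⟩
  let b : Idx κ := ⟨I.pts ξ, I.lt_ord ξ hξ⟩
  have hb₁ : b.1 + 1 < κ.ord := hκ.add_one_lt b.2
  have hfg : K.pts (b.1 + 1 + 1) < (g b).1 := hα b (hαξ.trans_le (I.le_pts hξ))
  have hgI : (g b).1 < I.pts (ξ + 1) :=
    hI _ b (I.strictMono _ _ (lt_add_one ξ) (hκ.add_one_lt hξ))
  exact ⟨b.1 + 1, hb₁, (lt_add_one _).le.trans (K.le_pts hb₁), (hfg.trans hgI).le⟩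

end Dominance

theorem dominating_unbounding_via_interval_partitions (κ : Cardinal.{0})
    (hreg : κ.IsRegular) (hunc : Cardinal.aleph0 < κ) :
    dK κ = sInf { c : Cardinal.{1} | ∃ 𝒥 : Set (IntervalPartition κ),
        (∀ I : IntervalPartition κ, ∃ K ∈ 𝒥, IPDom κ I K) ∧ c = #𝒥 } ∧
    bK κ = sInf { c : Cardinal.{1} | ∃ 𝒥 : Set (IntervalPartition κ),
        (¬ ∃ I : IntervalPartition κ, ∀ K ∈ 𝒥, IPDom κ K I) ∧ c = #𝒥 } := by
  have hκ : IsSuccLimit κ.ord := isSuccLimit_ord hunc.le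
  choose Ψ hΨ using exists_closedUnder hreg hunc
  have h₁ : TukeyLE (EvDom κ) (IPDom κ) :=
    ⟨Ψ, fun K => K.ptsAddTwo hκ, fun g _ => evDom_ptsAddTwo_of_ipDom hκ (hΨ g)⟩
  have h₂ : TukeyLE (IPDom κ) (EvDom κ) :=
    ⟨fun K => K.ptsAddTwo hκ, Ψ, fun _ g => ipDom_of_evDom_ptsAddTwo hκ (hΨ g)⟩
  refine ⟨dominatingNumber_eq_of_tukeyLE h₁ h₂, ?_⟩
  simp only [not_exists, not_forall, exists_prop]
  exact unboundingNumber_eq_of_tukeyLE h₁ h₂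

end GenCichon
end

section
/- Assume κ is strongly inaccessible. Then every κ-meager subset of 2^κ is combinatorially meager: for every κ-meager A ⊆ 2^κ there is a κ-chopped function (x, I) such that no member of A matches (x, I). -/
/-!
Write `A = ⋃_{i<κ} B i` with every `B i` nowhere dense. Given `δ, γ < κ`, inaccessibility
leaves fewer than `κ` pairs `(s, i)` with `s ∈ 2^δ` and `i < γ`. Extending a condition once for
each pair, and taking unions at limit stages (which stay below `κ` by regularity), yields
`τ : [δ, δ') → 2` such that `[s⌢τ]` misses `B i` for all these pairs. Running the same kind of
recursion `κ` times, with `γ = α` at stage `α`, produces the intervals `I_α` together with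
`x ↾ I_α`. If `y ∈ B i` agreed with `x` on some `I_α` with `α > i`, then `y` would lie in
`[y ↾ i_α ⌢ x ↾ I_α]`, which misses `B i`.
-/

namespace GenCichon

open Cardinal Set Ordinal

universe u

noncomputable section

/-- `(δ, σ)` stands for `σ ↾ δ ∈ 2^{<κ}`, as in `cyl`. -/
abbrev Cond : Type 1 := Ordinal.{0} × (Ordinal.{0} → Bool)

/-- Below `δ₀` conditions are not compared: that part is later filled by an arbitrary
`s ∈ 2^δ₀`. -/
def ExtendsAbove (δ₀ : Ordinal.{0}) (d c : Cond) : Prop :=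
  c.1 ≤ d.1 ∧ ∀ ζ, δ₀ ≤ ζ → ζ < c.1 → d.2 ζ = c.2 ζ

theorem ExtendsAbove.trans {δ₀ : Ordinal.{0}} {c d e : Cond} (hed : ExtendsAbove δ₀ e d)
    (hdc : ExtendsAbove δ₀ d c) : ExtendsAbove δ₀ e c :=
  ⟨hdc.1.trans hed.1, fun ζ h₀ hζ => (hed.2 ζ h₀ (hζ.trans_le hdc.1)).trans (hdc.2 ζ h₀ hζ)⟩

def paste (δ : Ordinal.{0}) (s τ : Ordinal.{0} → Bool) (ζ : Ordinal.{0}) : Bool :=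
  if ζ < δ then s ζ else τ ζ

theorem cyl_subset_cyl {κ : Cardinal.{0}} {δ₁ δ₂ : Ordinal.{0}} {σ₁ σ₂ : Ordinal.{0} → Bool}
    (hδ : δ₁ ≤ δ₂) (hσ : ∀ ζ < δ₁, σ₂ ζ = σ₁ ζ) : cyl κ δ₂ σ₂ ⊆ cyl κ δ₁ σ₁ :=
  fun _ hx b hb => (hx b (hb.trans_le hδ)).trans (hσ b hb)

theorem cyl_paste_subset {κ : Cardinal.{0}} {δ : Ordinal.{0}} (s : Ordinal.{0} → Bool)
    {c d : Cond} (h : ExtendsAbove δ d c) :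
    cyl κ d.1 (paste δ s d.2) ⊆ cyl κ c.1 (paste δ s c.2) :=
  cyl_subset_cyl h.1 fun ζ hζ => by
    by_cases hζδ : ζ < δ
    · simp only [paste, if_pos hζδ]
    · simp only [paste, if_neg hζδ]
      exact h.2 ζ (not_lt.1 hζδ) hζ

theorem IsNwd.exists_extendsAbove_cyl_paste_inter_eq_empty {κ : Cardinal.{0}}
    {B : Set (GenCantor κ)} (hB : IsNwd κ B) {δ : Ordinal.{0}} (hδ : δ < κ.ord)
    (s : Ordinal.{0} → Bool) (c : Cond) (hc : c.1 < κ.ord) :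
    ∃ d : Cond, ExtendsAbove δ d c ∧ d.1 < κ.ord ∧ cyl κ d.1 (paste δ s d.2) ∩ B = ∅ := by
  obtain ⟨δ', hδ', hδ'κ, σ, hσ, hσB⟩ := hB _ (max_lt hc hδ) (paste δ s c.2)
  have hpaste : paste δ s σ = σ := funext fun ζ => by
    by_cases h : ζ < δ
    · rw [hσ ζ (lt_sup_of_lt_right h)]
      simp only [paste, if_pos h]
    · simp only [paste, if_neg h]
  refine ⟨(δ', σ), ⟨le_sup_left.trans hδ', fun ζ h₀ hζ => ?_⟩, hδ'κ, by rwa [hpaste]⟩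
  change σ ζ = c.2 ζ
  rw [hσ ζ (lt_sup_of_lt_left hζ)]
  simp only [paste, if_neg (not_lt.2 h₀)]

/-- The value at `ζ` is taken from the first `c q` whose domain contains `ζ`; along an
increasing chain this is the union of the chain. -/
def glue (c : Ordinal.{0} → Cond) (p ζ : Ordinal.{0}) : Bool :=
  open scoped Classical in
  if ∃ q < p, ζ < (c q).1 then (c (sInf {q | q < p ∧ ζ < (c q).1})).2 ζ else false

def limitBelow (δ₀ : Ordinal.{0}) (c : Ordinal.{0} → Cond) (p : Ordinal.{0}) : Cond :=
  (δ₀ ⊔ ⨆ q : Iio p, (c q).1, glue c p)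

theorem limitBelow_zero_fst (c : Ordinal.{0} → Cond) (p : Ordinal.{0}) :
    (limitBelow 0 c p).1 = ⨆ q : Iio p, (c q).1 :=
  max_eq_right zero_le

theorem limitBelow_congr {δ₀ p : Ordinal.{0}} {c c' : Ordinal.{0} → Cond}
    (h : ∀ q < p, c q = c' q) : limitBelow δ₀ c p = limitBelow δ₀ c' p := by
  have hcover : ∀ ζ, (∃ q < p, ζ < (c q).1) ↔ ∃ q < p, ζ < (c' q).1 := fun ζ =>
    exists_congr fun q => and_congr_right fun hq => by rw [h q hq]
  have hglue : glue c p = glue c' p := funext fun ζ => by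
    have hset : {q | q < p ∧ ζ < (c q).1} = {q | q < p ∧ ζ < (c' q).1} := Set.ext fun q =>
      and_congr_right fun hq => by rw [h q hq]
    by_cases hne : ∃ q < p, ζ < (c q).1
    · obtain ⟨q, hq, hζ⟩ := (hcover ζ).1 hne
      have hmem := csInf_mem (s := {q | q < p ∧ ζ < (c' q).1}) ⟨q, hq, hζ⟩
      rw [glue, glue, if_pos hne, if_pos ((hcover ζ).1 hne), hset, h _ hmem.1]
    · rw [glue, glue, if_neg hne, if_neg ((hcover ζ).not.1 hne)]
  simp only [limitBelow, hglue, fun q : Iio p => h q q.2]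

theorem extendsAbove_limitBelow {δ₀ p q : Ordinal.{0}} {c : Ordinal.{0} → Cond}
    (hc : ∀ q < p, ∀ r < q, ExtendsAbove δ₀ (c q) (c r)) (hq : q < p) :
    ExtendsAbove δ₀ (limitBelow δ₀ c p) (c q) := by
  refine ⟨le_sup_of_le_right (Ordinal.le_iSup (fun r : Iio p => (c r).1) ⟨q, hq⟩),
    fun ζ h₀ hζ => ?_⟩
  have hq' : q ∈ {r | r < p ∧ ζ < (c r).1} := ⟨hq, hζ⟩
  have hglue : (limitBelow δ₀ c p).2 ζ = (c (sInf {r | r < p ∧ ζ < (c r).1})).2 ζ :=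
    if_pos ⟨q, hq, hζ⟩
  rw [hglue]
  rcases (csInf_le' hq').lt_or_eq with hlt | heq
  · exact ((hc q hq _ hlt).2 ζ h₀ (csInf_mem ⟨q, hq'⟩).2).symm
  · rw [heq]

def fusionChain (δ₀ : Ordinal.{0}) (step : Ordinal.{0} → Cond → Cond) :
    Ordinal.{0} → Cond :=
  wellFounded_lt.fix fun p IH =>
    step p (limitBelow δ₀ (fun q => if h : q < p then IH q h else default) p)

theorem fusionChain_eq (δ₀ : Ordinal.{0}) (step : Ordinal.{0} → Cond → Cond)
    (p : Ordinal.{0}) :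
    fusionChain δ₀ step p = step p (limitBelow δ₀ (fusionChain δ₀ step) p) := by
  rw [fusionChain, wellFounded_lt.fix_eq, ← fusionChain]
  exact congrArg _ (limitBelow_congr fun q hq => dif_pos hq)

theorem iSup_Iio_lt_ord {κ : Cardinal.{0}} (hκ : κ.IsRegular) {p : Ordinal.{0}}
    (hp : p < κ.ord) {f : Ordinal.{0} → Ordinal.{0}} (hf : ∀ q < p, f q < κ.ord) :
    ⨆ q : Iio p, f q < κ.ord := by
  refine Ordinal.lift_iSup_lt_of_lt_cof ?_ fun q => hf q q.2
  rw [← Ordinal.lift_cof, hκ.cof_ord, Cardinal.mk_Iio_ordinal, Cardinal.lift_lift,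
    Cardinal.lift_lt]
  exact Cardinal.lt_ord.1 hp

section FusionChain

variable {δ₀ : Ordinal.{0}} {step : Ordinal.{0} → Cond → Cond}

theorem fusionChain_extendsAbove (hstep : ∀ p c, ExtendsAbove δ₀ (step p c) c)
    (p : Ordinal.{0}) :
    ∀ q < p, ExtendsAbove δ₀ (fusionChain δ₀ step p) (fusionChain δ₀ step q) := by
  induction p using WellFoundedLT.induction with
  | ind p ih =>
    intro q hq
    rw [fusionChain_eq δ₀ step p]
    exact (hstep _ _).trans (extendsAbove_limitBelow ih hq)

theorem limitBelow_fusionChain_extendsAbove (hstep : ∀ p c, ExtendsAbove δ₀ (step p c) c)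
    {p q : Ordinal.{0}} (hq : q < p) :
    ExtendsAbove δ₀ (limitBelow δ₀ (fusionChain δ₀ step) p) (fusionChain δ₀ step q) :=
  extendsAbove_limitBelow (fun q _ => fusionChain_extendsAbove hstep q) hq

theorem limitBelow_fst_lt {κ : Cardinal.{0}} (hκ : κ.IsRegular) {p : Ordinal.{0}}
    (hδ₀ : δ₀ < κ.ord) (hp : p < κ.ord) {c : Ordinal.{0} → Cond}
    (hc : ∀ q < p, (c q).1 < κ.ord) : (limitBelow δ₀ c p).1 < κ.ord :=
  max_lt hδ₀ (iSup_Iio_lt_ord hκ hp hc)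

theorem fusionChain_fst_lt {κ : Cardinal.{0}} (hκ : κ.IsRegular) {μ : Ordinal.{0}}
    (hδ₀ : δ₀ < κ.ord) (hμ : μ ≤ κ.ord)
    (hstep : ∀ p < μ, ∀ c : Cond, c.1 < κ.ord → (step p c).1 < κ.ord) :
    ∀ p < μ, (fusionChain δ₀ step p).1 < κ.ord := by
  intro p
  induction p using WellFoundedLT.induction with
  | ind p ih =>
    intro hp
    rw [fusionChain_eq]
    exact hstep p hp _ (limitBelow_fst_lt hκ hδ₀ (hp.trans_le hμ)
      fun q hq => ih q hq (hq.trans hp))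

end FusionChain

theorem exists_step {κ : Cardinal.{0}} {δ₀ μ : Ordinal.{0}}
    {P : Ordinal.{0} → Cond → Cond → Prop}
    (h : ∀ p < μ, ∀ c : Cond, c.1 < κ.ord → ∃ d, ExtendsAbove δ₀ d c ∧ P p c d) :
    ∃ step : Ordinal.{0} → Cond → Cond, (∀ p c, ExtendsAbove δ₀ (step p c) c) ∧
      ∀ p < μ, ∀ c : Cond, c.1 < κ.ord → P p c (step p c) := by
  classical
  refine ⟨fun p c => if hc : p < μ ∧ c.1 < κ.ord then (h p hc.1 c hc.2).choose else c,
    fun p c => ?_, fun p hp c hc => ?_⟩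
  · dsimp only
    split_ifs with hc
    exacts [(h p hc.1 c hc.2).choose_spec.1, ⟨le_rfl, fun _ _ _ => rfl⟩]
  · simp only [dif_pos (And.intro hp hc)]
    exact (h p hp c hc).choose_spec.2

theorem exists_enumeration {κ : Cardinal.{0}} {T : Type u} [Nonempty T]
    (hT : #T < Cardinal.lift.{u} κ) :
    ∃ μ < κ.ord, ∃ e : Ordinal.{0} → T, ∀ t, ∃ p < μ, e p = t := by
  obtain ⟨c, hc⟩ := Cardinal.mem_range_lift_of_le hT.le
  obtain ⟨g⟩ : Nonempty (T ↪ Iio c.ord) := by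
    rw [← Cardinal.lift_mk_le'.{u, 1}, Cardinal.mk_Iio_ordinal, ← hc, Cardinal.card_ord,
      Cardinal.lift_lift, Cardinal.lift_lift]
  have hg : Function.Injective fun t => (g t : Ordinal.{0}) :=
    Subtype.val_injective.comp g.injective
  exact ⟨c.ord, Cardinal.ord_lt_ord.2 (Cardinal.lift_lt.1 (hc.trans_lt hT)),
    Function.invFun fun t => (g t : Ordinal.{0}),
    fun t => ⟨g t, (g t).2, Function.leftInverse_invFun hg t⟩⟩

theorem exists_forall_of_dense_open {κ : Cardinal.{0}} (hκ : κ.IsRegular) {δ₀ : Ordinal.{0}}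
    (hδ₀ : δ₀ < κ.ord) {T : Type u} (hT : #T < Cardinal.lift.{u} κ)
    (D : T → Cond → Prop) (hopen : ∀ t c d, D t c → ExtendsAbove δ₀ d c → D t d)
    (hdense : ∀ t (c : Cond), c.1 < κ.ord →
      ∃ d, ExtendsAbove δ₀ d c ∧ d.1 < κ.ord ∧ D t d) :
    ∃ d : Cond, d.1 < κ.ord ∧ ∀ t, D t d := by
  rcases isEmpty_or_nonempty T with hT₀ | hT₀
  · exact ⟨(δ₀, fun _ => false), hδ₀, isEmptyElim⟩
  obtain ⟨μ, hμ, e, he⟩ := exists_enumeration hT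
  obtain ⟨step, hext, hstep⟩ := exists_step (δ₀ := δ₀) (μ := μ)
    (P := fun p _ d => d.1 < κ.ord ∧ D (e p) d) fun p _ c hc => hdense (e p) c hc
  have hlt := fusionChain_fst_lt hκ hδ₀ hμ.le fun p hp c hc => (hstep p hp c hc).1
  refine ⟨limitBelow δ₀ (fusionChain δ₀ step) μ, limitBelow_fst_lt hκ hδ₀ hμ hlt,
    fun t => ?_⟩
  obtain ⟨p, hp, rfl⟩ := he t
  refine hopen _ _ _ ?_ (limitBelow_fusionChain_extendsAbove hext hp)
  rw [fusionChain_eq]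
  exact (hstep p hp _ (limitBelow_fst_lt hκ hδ₀ (hp.trans hμ)
    fun q hq => hlt q (hq.trans hp))).2

theorem mk_restriction_prod_Iio_lt {κ : Cardinal.{0}} (hκ : κ.IsInaccessible)
    {δ γ : Ordinal.{0}} (hδ : δ < κ.ord) (hγ : γ < κ.ord) :
    #((Iio δ → Bool) × Iio γ) < Cardinal.lift.{1} κ := by
  rw [Cardinal.mk_prod, Cardinal.mk_arrow, Cardinal.mk_bool, Cardinal.mk_Iio_ordinal,
    Cardinal.mk_Iio_ordinal]
  simp only [Cardinal.lift_id, Cardinal.lift_two, Cardinal.lift_lift]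
  rw [← Cardinal.lift_two.{1, 0}, ← Cardinal.lift_power, ← Cardinal.lift_mul,
    Cardinal.lift_lt]
  exact Cardinal.mul_lt_of_lt hκ.aleph0_lt.le
    (hκ.isStrongLimit.isStrongPrelimit (Cardinal.lt_ord.1 hδ)) (Cardinal.lt_ord.1 hγ)

theorem exists_extendsAbove_forall_cyl_paste_inter_eq_empty {κ : Cardinal.{0}}
    (hκ : κ.IsInaccessible) {B : Idx κ → Set (GenCantor κ)} (hB : ∀ i, IsNwd κ (B i))
    {γ : Ordinal.{0}} (hγ : γ < κ.ord) (c : Cond) (hc : c.1 < κ.ord) :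
    ∃ d : Cond, ExtendsAbove 0 d c ∧ c.1 < d.1 ∧ d.1 < κ.ord ∧
      ∀ (s : Ordinal.{0} → Bool) (i : Idx κ), i.1 < γ →
        cyl κ d.1 (paste c.1 s d.2) ∩ B i = ∅ := by
  let extend (s : Iio c.1 → Bool) (ζ : Ordinal.{0}) : Bool :=
    if h : ζ < c.1 then s ⟨ζ, h⟩ else false
  obtain ⟨e, heκ, he⟩ := exists_forall_of_dense_open hκ.isRegular hc
    (mk_restriction_prod_Iio_lt hκ hc hγ)
    (fun t e => cyl κ e.1 (paste c.1 (extend t.1) e.2) ∩ B ⟨t.2, t.2.2.trans hγ⟩ = ∅)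
    (fun t _ _ hD hde => subset_eq_empty (inter_subset_inter_left _ (cyl_paste_subset _ hde)) hD)
    fun t e hec => (hB _).exists_extendsAbove_cyl_paste_inter_eq_empty hc _ e hec
  refine ⟨(e.1 ⊔ Order.succ c.1, paste c.1 c.2 e.2),
    ⟨le_sup_of_le_right (Order.le_succ _), fun ζ _ hζ => if_pos hζ⟩,
    lt_sup_of_lt_right (Order.lt_succ _),
    max_lt heκ ((Cardinal.isSuccLimit_ord hκ.aleph0_lt.le).succ_lt hc), fun s i hi => ?_⟩
  refine subset_eq_empty (inter_subset_inter_left _ (cyl_subset_cyl le_sup_left fun ζ _ => ?_))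
    (he (fun ζ => s ζ, ⟨i, hi⟩))
  by_cases h : ζ < c.1
  · simp only [paste, extend, if_pos h, dif_pos h]
  · simp only [paste, if_neg h]

theorem exists_intervalPartition_pts_eq_iSup {κ : Cardinal.{0}} (hκ : κ.IsRegular)
    {f : Ordinal.{0} → Ordinal.{0}} (hf : ∀ p < κ.ord, ⨆ q : Iio p, f q < f p)
    (hfκ : ∀ p < κ.ord, f p < κ.ord) :
    ∃ I : IntervalPartition κ, ∀ α < κ.ord, I.pts α = ⨆ q : Iio α, f q := by
  refine ⟨{ pts := fun α => if α < κ.ord then ⨆ q : Iio α, f q else 0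
            zero := ?_, lt_ord := ?_, strictMono := ?_, isCont := ?_, eq_zero_of_le := ?_ },
    fun α hα => if_pos hα⟩
  · simp
  · intro α hα
    simp only [if_pos hα]
    exact iSup_Iio_lt_ord hκ hα fun q hq => hfκ q (hq.trans hα)
  · intro α β hαβ hβ
    simp only [if_pos (hαβ.trans hβ), if_pos hβ]
    exact (hf α (hαβ.trans hβ)).trans_le
      (Ordinal.le_iSup (fun q : Iio β => f q) ⟨α, hαβ⟩)
  · intro δ hδ hδlim
    simp only [if_pos hδ]
    rw [iSup_congr fun β : Iio δ => if_pos (β.2.trans hδ)]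
    refine le_antisymm (Ordinal.iSup_le fun q => ?_)
      (Ordinal.iSup_le fun β => Ordinal.iSup_le fun q => ?_)
    · exact (Ordinal.le_iSup (fun r : Iio (q.1 + 1) => f r)
          ⟨q, mem_Iio.2 (Order.lt_add_one_iff.2 le_rfl)⟩).trans
        (Ordinal.le_iSup (fun β : Iio δ => ⨆ r : Iio β.1, f r)
          ⟨q + 1, hδlim.add_one_lt q.2⟩)
    · exact Ordinal.le_iSup (fun r : Iio δ => f r) ⟨q, mem_Iio.2 (q.2.trans β.2)⟩
  · intro α hα
    simp only [if_neg (not_lt.2 hα)]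

theorem exists_intervalPartition_forall_cyl_paste_inter_eq_empty {κ : Cardinal.{0}}
    (hκ : κ.IsInaccessible) {B : Idx κ → Set (GenCantor κ)} (hB : ∀ i, IsNwd κ (B i)) :
    ∃ (x : Ordinal.{0} → Bool) (I : IntervalPartition κ), ∀ α < κ.ord,
      ∀ (s : Ordinal.{0} → Bool) (i : Idx κ), i.1 < α →
        cyl κ (I.pts (α + 1)) (paste (I.pts α) s x) ∩ B i = ∅ := by
  have hreg := hκ.isRegular
  have hlim : Order.IsSuccLimit κ.ord := Cardinal.isSuccLimit_ord hreg.aleph0_le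
  obtain ⟨step, hext, hstep⟩ := exists_step (δ₀ := 0) (μ := κ.ord)
    fun p hp c hc => exists_extendsAbove_forall_cyl_paste_inter_eq_empty hκ hB hp c hc
  set c := fusionChain 0 step
  have hcκ : ∀ p < κ.ord, (c p).1 < κ.ord :=
    fusionChain_fst_lt hreg hlim.bot_lt le_rfl fun p hp d hd => (hstep p hp d hd).2.1
  have hc : ∀ p < κ.ord, ⨆ q : Iio p, (c q).1 < (c p).1 ∧ (c p).1 < κ.ord ∧
      ∀ (s : Ordinal.{0} → Bool) (i : Idx κ), i.1 < p →
        cyl κ (c p).1 (paste (⨆ q : Iio p, (c q).1) s (c p).2) ∩ B i = ∅ := by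
    intro p hp
    rw [← limitBelow_zero_fst, show c p = step p (limitBelow 0 c p) from fusionChain_eq 0 step p]
    exact hstep p hp _ (limitBelow_fst_lt hreg hlim.bot_lt hp fun q hq => hcκ q (hq.trans hp))
  obtain ⟨I, hI⟩ := exists_intervalPartition_pts_eq_iSup hreg (fun p hp => (hc p hp).1) hcκ
  refine ⟨(limitBelow 0 c κ.ord).2, I, fun α hα s i hi => ?_⟩
  rw [hI α hα, hI _ (hlim.add_one_lt hα)]
  have hlen : (c α).1 ≤ ⨆ q : Iio (α + 1), (c q).1 :=
    Ordinal.le_iSup (fun q : Iio (α + 1) => (c q).1)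
      ⟨α, mem_Iio.2 (Order.lt_add_one_iff.2 le_rfl)⟩
  refine subset_eq_empty (inter_subset_inter_left _ (cyl_subset_cyl hlen fun ζ hζ => ?_))
    ((hc α hα).2.2 s i hi)
  by_cases h : ζ < ⨆ q : Iio α, (c q).1
  · simp only [paste, if_pos h]
  · simp only [paste, if_neg h]
    exact (limitBelow_fusionChain_extendsAbove hext hα).2 ζ zero_le hζ

end

theorem meager_is_combinatorially_meager (κ : Cardinal.{0})
    (hinacc : κ.IsInaccessible) (A : Set (GenCantor κ)) (hA : IsKMeager κ A) :
    ∃ (x : GenCantor κ) (I : IntervalPartition κ), ∀ y ∈ A, ¬ Matches κ y x I := by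
  obtain ⟨B, hB, rfl⟩ := hA
  obtain ⟨x, I, hx⟩ := exists_intervalPartition_forall_cyl_paste_inter_eq_empty hinacc hB
  refine ⟨fun b => x b, I, fun y hy hmatch => ?_⟩
  obtain ⟨i, hi⟩ := mem_iUnion.1 hy
  have hlim : Order.IsSuccLimit κ.ord := Cardinal.isSuccLimit_ord hinacc.aleph0_lt.le
  obtain ⟨α, hiα, hα, hagree⟩ := hmatch (i + 1) (hlim.add_one_lt i.2)
  let s (ζ : Ordinal.{0}) : Bool := if h : ζ < κ.ord then y ⟨ζ, h⟩ else false
  refine (hx α hα s i (Order.add_one_le_iff.1 hiα)).subset ⟨fun b hb => ?_, hi⟩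
  by_cases h : b.1 < I.pts α
  · simp only [paste, if_pos h, s, dif_pos (mem_Iio.1 b.2)]
  · simp only [paste, if_neg h]
    exact hagree b (not_lt.1 h) hb

end GenCichon
end

section
/- Let κ be an uncountable regular cardinal with 2^{<κ} > κ (i.e., 2^λ > κ for some cardinal λ < κ). Then add(𝓜_κ) = cov(𝓜_κ) = κ⁺. -/
namespace GenCichon

open Cardinal Set Ordinal

variable {κ : Cardinal.{0}}

lemma mk_idx : #(Idx κ) = Cardinal.lift.{1} κ := by
  rw [Cardinal.mk_Iio_ordinal, Cardinal.card_ord]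

lemma isNwd_empty : IsNwd κ ∅ :=
  fun δ hδ σ => ⟨δ, le_rfl, hδ, σ, fun _ _ => rfl, Set.inter_empty _⟩

lemma IsNwd.mono {A B : Set (GenCantor κ)} (hAB : A ⊆ B) (hB : IsNwd κ B) : IsNwd κ A := by
  intro δ hδ σ
  obtain ⟨δ', hδδ', hδ', σ', hσ', hdisj⟩ := hB δ hδ σ
  exact ⟨δ', hδδ', hδ', σ', hσ',
    Set.subset_empty_iff.1 (hdisj ▸ Set.inter_subset_inter_right _ hAB)⟩

lemma isKMeager_iUnion {ι : Type 1} (hκ : ℵ₀ ≤ κ) (hι : #ι ≤ Cardinal.lift.{1} κ)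
    {B : ι → Set (GenCantor κ)} (hB : ∀ i, IsKMeager κ (B i)) : IsKMeager κ (⋃ i, B i) := by
  choose C hC hBC using hB
  have hcard : #(ι × Idx κ) ≤ #(Idx κ) := by
    rw [Cardinal.mk_prod, Cardinal.lift_id, Cardinal.lift_id, mk_idx]
    calc #ι * Cardinal.lift.{1} κ ≤ Cardinal.lift.{1} κ * Cardinal.lift.{1} κ :=
          mul_le_mul_left hι _
      _ = Cardinal.lift.{1} κ := Cardinal.mul_eq_self (Cardinal.aleph0_le_lift.2 hκ)
  obtain ⟨e⟩ := hcard
  -- each piece is one of the `C i j`, or empty when `k` is not in the range of `e`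
  refine ⟨fun k => ⋃ (p) (_ : e p = k), C p.1 p.2, fun k => ?_, ?_⟩
  · by_cases hk : ∃ p, e p = k
    · obtain ⟨p, rfl⟩ := hk
      refine (hC p.1 p.2).mono (Set.iUnion₂_subset fun q hq => ?_)
      rw [e.injective hq]
    · push Not at hk
      simpa [hk] using isNwd_empty
  · rw [Set.iUnion_comm]
    simp only [hBC, Set.iUnion_iUnion_eq_right]
    exact (iSup_prod (f := fun p : ι × Idx κ => C p.1 p.2)).symm

lemma isKMeager_sUnion (hκ : ℵ₀ ≤ κ) {J : Set (Set (GenCantor κ))}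
    (hJ : ∀ A ∈ J, IsKMeager κ A) (hcard : #J ≤ Cardinal.lift.{1} κ) : IsKMeager κ (⋃₀ J) :=
  Set.sUnion_eq_iUnion ▸ isKMeager_iUnion hκ hcard fun A => hJ A A.2

section Baire

/-- `q` extends `p` as a condition `(δ, σ)` of `2^{<κ}`, so that `[q] ⊆ [p]`. -/
def Extends (q p : Ordinal × (Ordinal → Bool)) : Prop :=
  p.1 ≤ q.1 ∧ ∀ γ < p.1, q.2 γ = p.2 γ

lemma Extends.trans {p q r : Ordinal × (Ordinal → Bool)} (hrq : Extends r q)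
    (hqp : Extends q p) : Extends r p :=
  ⟨hqp.1.trans hrq.1, fun γ hγ => (hrq.2 γ (hγ.trans_le hqp.1)).trans (hqp.2 γ hγ)⟩

def IsExtChain (α : Ordinal) (p : ∀ β < α, Ordinal × (Ordinal → Bool)) : Prop :=
  ∀ β₁ h₁ β₂ h₂, β₁ < β₂ → Extends (p β₂ h₂) (p β₁ h₁)

lemma IsExtChain.agree {α : Ordinal} {p : ∀ β < α, Ordinal × (Ordinal → Bool)}
    (hp : IsExtChain α p) {β₁ β₂ γ : Ordinal} (h₁ : β₁ < α) (h₂ : β₂ < α)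
    (hγ₁ : γ < (p β₁ h₁).1) (hγ₂ : γ < (p β₂ h₂).1) : (p β₁ h₁).2 γ = (p β₂ h₂).2 γ := by
  rcases lt_trichotomy β₁ β₂ with h | rfl | h
  · exact ((hp β₁ h₁ β₂ h₂ h).2 γ hγ₁).symm
  · rfl
  · exact (hp β₂ h₂ β₁ h₁ h).2 γ hγ₂

lemma exists_lt_ord_forall_le (hreg : κ.IsRegular) {α : Ordinal} (hα : α < κ.ord)
    (f : ∀ β < α, Ordinal) (hf : ∀ β h, f β h < κ.ord) :
    ∃ δ < κ.ord, ∀ β h, f β h ≤ δ := by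
  refine ⟨⨆ β : Iio α, f β β.2, Ordinal.lift_iSup_lt_of_lt_cof ?_ fun β => hf β β.2,
    fun β h => Ordinal.le_iSup (fun β : Iio α => f β β.2) ⟨β, h⟩⟩
  rw [Cardinal.mk_Iio_ordinal, Cardinal.lift_umax, Cardinal.lift_id', ← Ordinal.lift_cof,
    hreg.cof_ord, Cardinal.lift_lt]
  exact Cardinal.lt_ord.1 hα

lemma IsExtChain.exists_extends (hreg : κ.IsRegular) {α : Ordinal} (hα : α < κ.ord)
    {p : ∀ β < α, Ordinal × (Ordinal → Bool)} (hp : IsExtChain α p)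
    (hlt : ∀ β h, (p β h).1 < κ.ord) :
    ∃ q : Ordinal × (Ordinal → Bool), q.1 < κ.ord ∧ ∀ β h, Extends q (p β h) := by
  classical
  obtain ⟨δ, hδ, hle⟩ := exists_lt_ord_forall_le hreg hα (fun β h => (p β h).1) hlt
  let σ : Ordinal → Bool := fun γ =>
    if h : ∃ β, ∃ hβ : β < α, γ < (p β hβ).1 then (p h.choose h.choose_spec.choose).2 γ
    else false
  refine ⟨(δ, σ), hδ, fun β h => ⟨hle β h, fun γ hγ => ?_⟩⟩
  have hex : ∃ β, ∃ hβ : β < α, γ < (p β hβ).1 := ⟨β, h, hγ⟩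
  simp only [σ, dif_pos hex]
  exact hp.agree _ _ hex.choose_spec.choose_spec hγ

variable (B : Idx κ → Set (GenCantor κ))

/-- Stage `α` of the Baire-category recursion: extend the chain built so far to a condition
of length `> α` whose cylinder avoids `B α`. -/
def IsBaireStep (α : Ordinal) (prev : ∀ β < α, Ordinal × (Ordinal → Bool))
    (q : Ordinal × (Ordinal → Bool)) : Prop :=
  q.1 < κ.ord ∧ α < q.1 ∧ (∀ β h, Extends q (prev β h)) ∧
    ∀ hα : α < κ.ord, cyl κ q.1 q.2 ∩ B ⟨α, hα⟩ = ∅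

variable {B}

lemma exists_isBaireStep (hreg : κ.IsRegular) (hB : ∀ i, IsNwd κ (B i)) {α : Ordinal}
    (hα : α < κ.ord) {prev : ∀ β < α, Ordinal × (Ordinal → Bool)} (hprev : IsExtChain α prev)
    (hlt : ∀ β h, (prev β h).1 < κ.ord) : ∃ q, IsBaireStep B α prev q := by
  obtain ⟨q, hq, hext⟩ := hprev.exists_extends hreg hα hlt
  have hsucc : α + 1 < κ.ord := (Cardinal.isSuccLimit_ord hreg.aleph0_le).add_one_lt hα
  obtain ⟨δ', hδ₀δ', hδ', σ', hσ', hdisj⟩ := hB ⟨α, hα⟩ (max q.1 (α + 1)) (max_lt hq hsucc) q.2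
  have hq' : Extends (δ', σ') q :=
    ⟨(le_max_left _ _).trans hδ₀δ', fun γ hγ => hσ' γ (hγ.trans_le (le_max_left _ _))⟩
  exact ⟨(δ', σ'), hδ', (Order.lt_add_one_iff.2 le_rfl).trans_le ((le_max_right _ _).trans hδ₀δ'),
    fun β h => hq'.trans (hext β h), fun _ => hdisj⟩

variable (B) in
noncomputable def baireSeq : Ordinal → Ordinal × (Ordinal → Bool) :=
  Ordinal.lt_wf.fix fun α prev => Classical.epsilon (IsBaireStep B α prev)

lemma isBaireStep_baireSeq (hreg : κ.IsRegular) (hB : ∀ i, IsNwd κ (B i)) :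
    ∀ α < κ.ord, IsBaireStep B α (fun β _ => baireSeq B β) (baireSeq B α) := by
  intro α
  induction α using WellFoundedLT.induction with
  | ind α ih =>
    intro hα
    rw [baireSeq, WellFounded.fix_eq]
    refine Classical.epsilon_spec (exists_isBaireStep hreg hB hα ?_ ?_)
    · exact fun β₁ _ β₂ h₂ hβ => (ih β₂ h₂ (h₂.trans hα)).2.2.1 β₁ hβ
    · exact fun β h => (ih β h (h.trans hα)).1

lemma exists_forall_notMem_of_isNwd (hreg : κ.IsRegular) (hB : ∀ i, IsNwd κ (B i)) :
    ∃ x : GenCantor κ, ∀ i, x ∉ B i := by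
  have hstep := isBaireStep_baireSeq hreg hB
  have hchain : IsExtChain κ.ord fun β _ => baireSeq B β :=
    fun β₁ _ β₂ h₂ hβ => (hstep β₂ h₂).2.2.1 β₁ hβ
  -- coordinate `β` is decided at stage `β + 1`, whose condition has length `> β + 1`
  refine ⟨fun β => (baireSeq B (β.1 + 1)).2 β.1, fun i hi => ?_⟩
  refine Set.eq_empty_iff_forall_notMem.1 ((hstep i.1 i.2).2.2.2 i.2) _ ⟨fun β hβ => ?_, hi⟩
  have hsucc : β.1 + 1 < κ.ord := (Cardinal.isSuccLimit_ord hreg.aleph0_le).add_one_lt β.2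
  exact hchain.agree hsucc i.2
    ((Order.lt_add_one_iff.2 le_rfl).trans (hstep _ hsucc).2.1) hβ

lemma not_isKMeager_univ (hreg : κ.IsRegular) : ¬ IsKMeager κ Set.univ := by
  rintro ⟨B, hB, huniv⟩
  obtain ⟨x, hx⟩ := exists_forall_notMem_of_isNwd hreg hB
  obtain ⟨i, hi⟩ := Set.mem_iUnion.1 (huniv ▸ Set.mem_univ x)
  exact hx i hi

end Baire

section Cover

lemma mul_add_one_lt_ord (hκ : ℵ₀ ≤ κ) {μ : Cardinal.{0}} (hμκ : μ < κ) {α : Ordinal}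
    (hα : α < κ.ord) : μ.ord * (α + 1) < κ.ord := by
  rw [Cardinal.lt_ord, Ordinal.card_mul, Cardinal.card_ord, Ordinal.card_add_one]
  exact Cardinal.mul_lt_of_lt hκ hμκ
    (Cardinal.add_lt_of_lt hκ (Cardinal.lt_ord.1 hα) (Cardinal.one_lt_aleph0.trans_le hκ))

lemma mul_add_lt_mul_add_one {a b c : Ordinal} (hc : c < a) : a * b + c < a * (b + 1) := by
  rw [mul_add_one]
  exact add_lt_add_right hc _

variable (μ : Cardinal.{0})

/-- The `α`-th block `y ↾ [μ·α, μ·α + μ)` of `y`, as an element of `2^μ`. -/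
noncomputable def block (y : GenCantor κ) (α : Ordinal) (γ : Iio μ.ord) : Bool :=
  if h : μ.ord * α + γ < κ.ord then y ⟨_, h⟩ else false

def blockAvoidSet (s : Iio μ.ord → Bool) (δ : Ordinal) : Set (GenCantor κ) :=
  {y | ∀ α : Idx κ, δ ≤ α.1 → block μ y α.1 ≠ s}

variable {μ}

lemma isNwd_blockAvoidSet (hκ : ℵ₀ ≤ κ) (hμκ : μ < κ) (hμ : μ ≠ 0) (s : Iio μ.ord → Bool)
    {δ : Ordinal} (hδ : δ < κ.ord) : IsNwd κ (blockAvoidSet μ s δ) := by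
  intro δ₀ hδ₀ σ
  set α := max δ δ₀
  have hα : α < κ.ord := max_lt hδ hδ₀
  have hδ₀α : δ₀ ≤ μ.ord * α :=
    (le_max_right δ δ₀).trans (Ordinal.le_mul_right α (Cardinal.ord_pos.2 (pos_iff_ne_zero.2 hμ)))
  -- copy `σ` below `μ·α`, then write `s` into the `α`-th block
  let σ' : Ordinal → Bool := fun γ =>
    if γ < μ.ord * α then σ γ else if h : γ - μ.ord * α < μ.ord then s ⟨_, h⟩ else false
  refine ⟨μ.ord * (α + 1), hδ₀α.trans (mul_le_mul_right le_self_add _),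
    mul_add_one_lt_ord hκ hμκ hα, σ', fun γ hγ => if_pos (hγ.trans_le hδ₀α), ?_⟩
  refine Set.eq_empty_iff_forall_notMem.2 fun y ⟨hcyl, havoid⟩ =>
    havoid ⟨α, hα⟩ (le_max_left _ _) ?_
  funext γ
  have hγ := mul_add_lt_mul_add_one (b := α) γ.2
  rw [block, dif_pos (hγ.trans (mul_add_one_lt_ord hκ hμκ hα)), hcyl _ hγ]
  simp only [σ', if_neg (not_lt.2 (le_self_add : μ.ord * α ≤ _)), Ordinal.add_sub_cancel,
    Subtype.coe_eta]
  exact dif_pos γ.2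

lemma exists_isKMeager_cover (hκ : ℵ₀ ≤ κ) (hμκ : μ < κ) (hpow : κ < 2 ^ μ) :
    ∃ J : Set (Set (GenCantor κ)), (∀ A ∈ J, IsKMeager κ A) ∧ ⋃₀ J = Set.univ ∧
      #J ≤ Cardinal.lift.{1} (Order.succ κ) := by
  have hμ : μ ≠ 0 := by
    rintro rfl
    rw [power_zero, Cardinal.lt_one_iff] at hpow
    exact Cardinal.aleph0_ne_zero (le_zero_iff.1 (hpow ▸ hκ))
  have hS : Cardinal.lift.{1} (Order.succ κ) ≤ #(Iio μ.ord → Bool) := by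
    rw [Cardinal.mk_arrow, Cardinal.mk_Iio_ordinal, Cardinal.card_ord, Cardinal.mk_bool,
      Cardinal.lift_umax, Cardinal.lift_id', ← Cardinal.lift_power, Cardinal.lift_le]
    exact Order.succ_le_of_lt hpow
  obtain ⟨S, hS⟩ := Cardinal.le_mk_iff_exists_set.1 hS
  let A : (Iio μ.ord → Bool) → Set (GenCantor κ) := fun s => ⋃ δ : Idx κ, blockAvoidSet μ s δ.1
  refine ⟨A '' S, ?_, Set.eq_univ_of_forall fun y => ?_, Cardinal.mk_image_le.trans hS.le⟩
  · rintro _ ⟨s, -, rfl⟩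
    exact ⟨_, fun δ => isNwd_blockAvoidSet hκ hμκ hμ s δ.2, rfl⟩
  -- `y` has only `κ` blocks, so some `s ∈ S` is none of them
  obtain ⟨s, hsS, hs⟩ : ∃ s ∈ S, s ∉ Set.range fun α : Idx κ => block μ y α.1 := by
    by_contra! hsub
    have := (Cardinal.mk_le_mk_of_subset hsub).trans Cardinal.mk_range_le
    rw [hS, mk_idx, Cardinal.lift_le] at this
    exact (Order.lt_succ_of_not_isMax (not_isMax κ)).not_ge this
  have hκpos : (0 : Ordinal) < κ.ord :=
    Cardinal.ord_pos.2 (Cardinal.aleph0_pos.trans_le hκ)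
  exact ⟨A s, ⟨s, hsS, rfl⟩, Set.mem_iUnion.2 ⟨⟨0, hκpos⟩, fun α _ h => hs ⟨α, h⟩⟩⟩

end Cover

lemma lift_succ_le_mk_of_not_isKMeager_sUnion (hκ : ℵ₀ ≤ κ) {J : Set (Set (GenCantor κ))}
    (hJ : ∀ A ∈ J, IsKMeager κ A) (hJ' : ¬ IsKMeager κ (⋃₀ J)) :
    Cardinal.lift.{1} (Order.succ κ) ≤ #J := by
  rw [Cardinal.lift_succ, Order.succ_le_iff]
  exact lt_of_not_ge fun hle => hJ' (isKMeager_sUnion hκ hJ hle)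

theorem addM_covM_eq_succ_of_twoPowLT_gt_general (κ : Cardinal.{0})
    (hreg : κ.IsRegular)
    (hpow : ∃ μ < κ, κ < 2 ^ μ) :
    addM κ = Cardinal.lift.{1} (Order.succ κ) ∧
    covM κ = Cardinal.lift.{1} (Order.succ κ) := by
  obtain ⟨μ, hμκ, hpow⟩ := hpow
  have hκ := hreg.aleph0_le
  obtain ⟨J, hJ, hJuniv, hJcard⟩ := exists_isKMeager_cover hκ hμκ hpow
  have hJ' : ¬ IsKMeager κ (⋃₀ J) := hJuniv ▸ not_isKMeager_univ hreg
  -- the cover `J` is at once the least witness for `add` and for `cov`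
  have hcard : #J = Cardinal.lift.{1} (Order.succ κ) :=
    le_antisymm hJcard (lift_succ_le_mk_of_not_isKMeager_sUnion hκ hJ hJ')
  refine ⟨IsLeast.csInf_eq ⟨⟨J, hJ, hJ', hcard.symm⟩, ?_⟩,
    IsLeast.csInf_eq ⟨⟨J, hJ, hJuniv, hcard.symm⟩, ?_⟩⟩
  · rintro _ ⟨J', hJ'm, hJ'n, rfl⟩
    exact lift_succ_le_mk_of_not_isKMeager_sUnion hκ hJ'm hJ'n
  · rintro _ ⟨J', hJ'm, hJ'u, rfl⟩
    exact lift_succ_le_mk_of_not_isKMeager_sUnion hκ hJ'm (hJ'u ▸ not_isKMeager_univ hreg)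

theorem addM_covM_eq_succ_of_twoPowLT_gt (κ : Cardinal.{0})
    (hreg : κ.IsRegular) (hunc : Cardinal.aleph0 < κ)
    (hpow : ∃ μ < κ, κ < 2 ^ μ) :
    addM κ = Cardinal.lift.{1} (Order.succ κ) ∧
    covM κ = Cardinal.lift.{1} (Order.succ κ) :=
  addM_covM_eq_succ_of_twoPowLT_gt_general κ hreg hpow

end GenCichon
end

section
/- Let κ be an uncountable regular cardinal. Every subset X ⊆ 2^κ of cardinality less than 2^{<κ} is κ-meager; consequently non(𝓜_κ) ≥ 2^{<κ}. -/
namespace GenCichon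

open Cardinal Set Ordinal


/-!
Small sets are nowhere dense: if `|X| < 2^μ` with `μ < κ`, then above any `δ < κ` some pattern
on the block `[δ, δ + μ)` is realised by no element of `X`. On the other hand `2^κ` is not
`κ`-meager (Baire category theorem): given `κ` dense sets of conditions, build a chain of
conditions of length `κ` meeting them in turn; regularity of `κ` keeps the union of any proper
initial segment of the chain a condition of length `< κ`, and the union of the whole chain is a
point lying in a condition from every dense set.
-/

universe u v

abbrev Condition : Type 1 := Ordinal.{0} × (Ordinal.{0} → Bool)

namespace Condition

def Extends (q p : Condition) : Prop :=
  p.1 ≤ q.1 ∧ ∀ γ < p.1, q.2 γ = p.2 γ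

theorem Extends.refl (p : Condition) : p.Extends p :=
  ⟨le_rfl, fun _ _ => rfl⟩

theorem Extends.trans {p q r : Condition} (hrq : r.Extends q) (hqp : q.Extends p) :
    r.Extends p :=
  ⟨hqp.1.trans hrq.1, fun γ hγ => (hrq.2 γ (hγ.trans_le hqp.1)).trans (hqp.2 γ hγ)⟩

variable {ι : Type*} [LinearOrder ι] {c : ι → Condition}

theorem snd_eq_of_monotone (hc : ∀ ⦃j k⦄, j ≤ k → (c k).Extends (c j)) {j k : ι}
    {γ : Ordinal} (hj : γ < (c j).1) (hk : γ < (c k).1) : (c j).2 γ = (c k).2 γ := by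
  rcases le_total j k with hjk | hkj
  · exact ((hc hjk).2 γ hj).symm
  · exact (hc hkj).2 γ hk

open Classical in
noncomputable def unionFun (c : ι → Condition) (γ : Ordinal) : Bool :=
  if h : ∃ j, γ < (c j).1 then (c h.choose).2 γ else false

theorem extends_unionFun (hc : ∀ ⦃j k⦄, j ≤ k → (c k).Extends (c j)) {δ : Ordinal}
    (hδ : ∀ j, (c j).1 ≤ δ) (j : ι) : Extends (δ, unionFun c) (c j) := by
  refine ⟨hδ j, fun γ hγ => ?_⟩
  have h : ∃ j, γ < (c j).1 := ⟨j, hγ⟩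
  simp only [unionFun, dif_pos h]
  exact snd_eq_of_monotone hc h.choose_spec hγ

end Condition

/-- `IsNwd κ A` is definitionally `IsDenseCond κ fun δ σ => cyl κ δ σ ∩ A = ∅`. -/
def IsDenseCond (κ : Cardinal.{0}) (D : Ordinal → (Ordinal → Bool) → Prop) : Prop :=
  ∀ δ < κ.ord, ∀ σ : Ordinal → Bool, ∃ δ', δ ≤ δ' ∧ δ' < κ.ord ∧
    ∃ σ' : Ordinal → Bool, (∀ β < δ, σ' β = σ β) ∧ D δ' σ'

namespace IsDenseCond

variable {κ : Cardinal.{0}} {D : Ordinal → (Ordinal → Bool) → Prop}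

open Classical in
/-- Made total (the identity at lengths `≥ κ.ord`) so that `denseChain` can be defined before
its lengths are known to be `< κ.ord`. -/
noncomputable def extend (hD : IsDenseCond κ D) (δ : Ordinal) (σ : Ordinal → Bool) :
    Condition :=
  if hδ : δ < κ.ord then ((hD δ hδ σ).choose, (hD δ hδ σ).choose_spec.2.2.choose) else (δ, σ)

theorem extend_extends (hD : IsDenseCond κ D) (δ : Ordinal) (σ : Ordinal → Bool) :
    (hD.extend δ σ).Extends (δ, σ) := by
  unfold extend
  split_ifs with hδ
  · exact ⟨(hD δ hδ σ).choose_spec.1, (hD δ hδ σ).choose_spec.2.2.choose_spec.1⟩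
  · exact Condition.Extends.refl _

theorem extend_fst_lt (hD : IsDenseCond κ D) {δ : Ordinal} (σ : Ordinal → Bool)
    (hδ : δ < κ.ord) : (hD.extend δ σ).1 < κ.ord := by
  simp only [extend, dif_pos hδ]
  exact (hD δ hδ σ).choose_spec.2.1

theorem extend_mem (hD : IsDenseCond κ D) {δ : Ordinal} (σ : Ordinal → Bool)
    (hδ : δ < κ.ord) : D (hD.extend δ σ).1 (hD.extend δ σ).2 := by
  simp only [extend, dif_pos hδ]
  exact (hD δ hδ σ).choose_spec.2.2.choose_spec.2

end IsDenseCond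

theorem max_succ_iSup_Iio_lt_ord {κ : Cardinal.{0}} (hκ : κ.IsRegular) (i : Idx κ)
    {f : Iio i → Ordinal.{0}} (hf : ∀ j, f j < κ.ord) :
    max (Order.succ i.1) (⨆ j, f j) < κ.ord := by
  refine max_lt ((isSuccLimit_ord hκ.aleph0_le).succ_lt i.2) (Ordinal.lift_iSup_lt_of_lt_cof ?_ hf)
  rw [Cardinal.lift_uzero, ← Ordinal.lift_cof, hκ.cof_ord]
  have hle : #(Iio i) ≤ #(Iio i.1) :=
    Cardinal.mk_le_of_injective (f := fun j : Iio i => (⟨j.1.1, j.2⟩ : Iio i.1))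
      fun _ _ h => by simpa [Subtype.ext_iff] using h
  rw [Cardinal.mk_Iio_ordinal] at hle
  exact hle.trans_lt (Cardinal.lift_lt.2 (Cardinal.lt_ord.1 i.2))

section Chain

variable {κ : Cardinal.{0}} {D : Idx κ → Ordinal → (Ordinal → Bool) → Prop}
  (hD : ∀ i, IsDenseCond κ (D i))

noncomputable def denseChain (i : Idx κ) : Condition :=
  (hD i).extend (max (Order.succ i.1) (⨆ j : Iio i, (denseChain j).1))
    (Condition.unionFun fun j : Iio i => denseChain j)
termination_by i.1
decreasing_by all_goals exact Subtype.coe_lt_coe.2 (Set.mem_Iio.1 (Subtype.mem _))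

theorem denseChain_extends {i j : Idx κ} (hji : j ≤ i) :
    (denseChain hD i).Extends (denseChain hD j) := by
  induction i using WellFoundedLT.induction generalizing j with
  | _ i ih =>
    obtain hji | rfl := hji.lt_or_eq
    · have hc : ∀ ⦃k l : Iio i⦄, k ≤ l → (denseChain hD l).Extends (denseChain hD k) :=
        fun _ l hkl => ih l l.2 hkl
      have hbdd : BddAbove (range fun k : Iio i => (denseChain hD k).1) :=
        Ordinal.bddAbove_of_small
      rw [denseChain]
      exact ((hD i).extend_extends _ _).trans <| Condition.extends_unionFun hc
        (fun k => le_max_of_le_right (le_ciSup hbdd k)) ⟨j, hji⟩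
    · exact Condition.Extends.refl _

theorem lt_denseChain_fst (i : Idx κ) : i.1 < (denseChain hD i).1 := by
  rw [denseChain]
  exact (Order.lt_succ i.1).trans_le ((le_max_left _ _).trans ((hD i).extend_extends _ _).1)

theorem denseChain_fst_lt (hκ : κ.IsRegular) (i : Idx κ) : (denseChain hD i).1 < κ.ord := by
  induction i using WellFoundedLT.induction with
  | _ i ih =>
    rw [denseChain]
    exact (hD i).extend_fst_lt _ (max_succ_iSup_Iio_lt_ord hκ i fun j => ih j j.2)

theorem denseChain_mem (hκ : κ.IsRegular) (i : Idx κ) :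
    D i (denseChain hD i).1 (denseChain hD i).2 := by
  rw [denseChain]
  exact (hD i).extend_mem _ (max_succ_iSup_Iio_lt_ord hκ i fun j => denseChain_fst_lt hD hκ j)

end Chain

variable {κ : Cardinal.{0}}

theorem exists_forall_mem_cyl {D : Idx κ → Ordinal → (Ordinal → Bool) → Prop}
    (hκ : κ.IsRegular) (hD : ∀ i, IsDenseCond κ (D i)) :
    ∃ x : GenCantor κ, ∀ i, ∃ δ σ, D i δ σ ∧ x ∈ cyl κ δ σ := by
  refine ⟨fun β => (denseChain hD β).2 β.1,
    fun i => ⟨_, _, denseChain_mem hD hκ i, fun β hβ => ?_⟩⟩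
  exact Condition.snd_eq_of_monotone (fun _ _ => denseChain_extends hD)
    (lt_denseChain_fst hD β) hβ

theorem not_isKMeager_univ_s8 (hκ : κ.IsRegular) : ¬ IsKMeager κ (univ : Set (GenCantor κ)) := by
  rintro ⟨B, hB, hU⟩
  obtain ⟨x, hx⟩ := exists_forall_mem_cyl (D := fun i δ σ => cyl κ δ σ ∩ B i = ∅) hκ hB
  obtain ⟨i, hi⟩ := mem_iUnion.1 (hU ▸ mem_univ x)
  obtain ⟨δ, σ, hdisj, hxδ⟩ := hx i
  exact hdisj.subset ⟨hxδ, hi⟩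

theorem IsNwd.isKMeager {A : Set (GenCantor κ)} (hA : IsNwd κ A) (hκ : κ ≠ 0) :
    IsKMeager κ A :=
  have : Nonempty (Idx κ) := ⟨⟨0, ord_pos.2 (pos_iff_ne_zero.2 hκ)⟩⟩
  ⟨fun _ => A, fun _ => hA, (iUnion_const A).symm⟩

theorem isNwd_of_mk_lt_two_power (hκ : ℵ₀ ≤ κ) {X : Set (GenCantor κ)} {μ : Cardinal.{0}}
    (hμ : μ < κ) (hX : #X < lift.{1} (2 ^ μ)) : IsNwd κ X := by
  intro δ hδ σ
  have hadd := isPrincipal_add_ord hκ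
  have hμκ : μ.ord < κ.ord := ord_lt_ord.2 hμ
  let shift (j : Iio μ.ord) : Idx κ := ⟨δ + j.1, hadd hδ (j.2.trans hμκ)⟩
  obtain ⟨g, hg⟩ : ∃ g : Iio μ.ord → Bool, ∀ x ∈ X, x ∘ shift ≠ g := by
    by_contra! h
    refine hX.not_ge ?_
    calc lift.{1} (2 ^ μ) = #(Iio μ.ord → Bool) := by
          rw [mk_arrow, Cardinal.mk_Iio_ordinal, card_ord]; simp [lift_power]
      _ ≤ #X := mk_le_of_surjective (f := fun x : X => x.1 ∘ shift) fun g => by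
          obtain ⟨x, hx, rfl⟩ := h g
          exact ⟨⟨x, hx⟩, rfl⟩
  classical
  refine ⟨δ + μ.ord, le_self_add, hadd hδ hμκ,
    fun β => if β < δ then σ β else if h : β - δ < μ.ord then g ⟨β - δ, h⟩ else false,
    fun β hβ => if_pos hβ, eq_empty_of_forall_notMem fun y ⟨hy, hyX⟩ => hg y hyX ?_⟩
  funext j
  change y (shift j) = g j
  rw [hy (shift j) ((add_lt_add_iff_left δ).2 j.2)]
  simp [shift, Ordinal.add_sub_cancel, mem_Iio.1 j.2]

theorem exists_lt_lift_of_lt_lift_sSup {s : Set Cardinal.{u}} (hs : BddAbove s)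
    {a : Cardinal.{max u v}} (h : a < lift.{v} (sSup s)) : ∃ c ∈ s, a < lift.{v} c := by
  rw [lift_sSup hs] at h
  obtain ⟨_, ⟨c, hc, rfl⟩, hac⟩ := exists_lt_of_lt_csSup' h
  exact ⟨c, hc, hac⟩

theorem bddAbove_two_power_lt (κ : Cardinal.{0}) :
    BddAbove {c : Cardinal.{0} | ∃ μ < κ, c = 2 ^ μ} :=
  ⟨2 ^ κ, by rintro _ ⟨μ, hμ, rfl⟩; exact power_le_power_left two_ne_zero hμ.le⟩

theorem small_sets_meager_general (κ : Cardinal.{0})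
    (hreg : κ.IsRegular) :
    (∀ X : Set (GenCantor κ),
      #X < Cardinal.lift.{1} (sSup { c : Cardinal.{0} | ∃ μ < κ, c = 2 ^ μ }) →
      IsKMeager κ X) ∧
    Cardinal.lift.{1} (sSup { c : Cardinal.{0} | ∃ μ < κ, c = 2 ^ μ }) ≤ nonM κ := by
  have small : ∀ X : Set (GenCantor κ),
      #X < lift.{1} (sSup { c : Cardinal.{0} | ∃ μ < κ, c = 2 ^ μ }) → IsKMeager κ X := by
    intro X hX
    obtain ⟨_, ⟨μ, hμ, rfl⟩, hXμ⟩ := exists_lt_lift_of_lt_lift_sSup (bddAbove_two_power_lt κ) hX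
    exact (isNwd_of_mk_lt_two_power hreg.aleph0_le hμ hXμ).isKMeager hreg.pos.ne'
  refine ⟨small, le_csInf ⟨_, univ, not_isKMeager_univ_s8 hreg, rfl⟩ ?_⟩
  rintro _ ⟨X, hX, rfl⟩
  exact not_lt.1 fun h => hX (small X h)

theorem small_sets_meager (κ : Cardinal.{0})
    (hreg : κ.IsRegular) (hunc : Cardinal.aleph0 < κ) :
    (∀ X : Set (GenCantor κ),
      #X < Cardinal.lift.{1} (sSup { c : Cardinal.{0} | ∃ μ < κ, c = 2 ^ μ }) →
      IsKMeager κ X) ∧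
    Cardinal.lift.{1} (sSup { c : Cardinal.{0} | ∃ μ < κ, c = 2 ^ μ }) ≤ nonM κ :=
  small_sets_meager_general κ hreg

end GenCichon
end
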